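/- Under the hypotheses of the self-dependent-cut lemma (similar τ-multi-polynomials p₁,…,pₙ with common neat abstraction), the composition ⟨p₁⋯pₙ⟩ := p₁ ∘ ⌈p₂⌉ ∘ ⋯ ∘ ⌈pₙ⌉ is iterative: every component ⟨p₁⋯pₙ⟩[i] depends only on self-dependent variables, and only on variables with index j ≤ i. -/

import Mathlib

open MvPolynomial

/-- Variable set for τ-polynomials: `n` program variables plus the extra variable τ. -/
abbrev Vn (n : ℕ) := Fin n ⊕ Unit

open Classical in
/-- The linear part `Lin(r)`: the sum of monomials of `r` of the form `a·xᵢ`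
(linear in a single program variable, τ-free). -/
noncomputable def linPart {n : ℕ} (r : MvPolynomial (Vn n) ℕ) : MvPolynomial (Vn n) ℕ :=
  ∑ m ∈ r.support.filter (fun m => ∃ i : Fin n, m = Finsupp.single (Sum.inl i) 1),
    monomial m (r.coeff m)

open Classical in
/-- The non-linear part `NonLin(r)`: all remaining monomials, so `r = Lin(r) + NonLin(r)`. -/
noncomputable def nonLinPart {n : ℕ} (r : MvPolynomial (Vn n) ℕ) : MvPolynomial (Vn n) ℕ :=
  ∑ m ∈ r.support.filter (fun m => ¬ ∃ i : Fin n, m = Finsupp.single (Sum.inl i) 1),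
    monomial m (r.coeff m)

/-- Evaluation of a τ-polynomial at `x ∈ ℕⁿ` and `τ = t`, as a real number. -/
noncomputable def evalR {n : ℕ} (r : MvPolynomial (Vn n) ℕ) (x : Fin n → ℕ) (t : ℕ) : ℝ :=
  aeval (Sum.elim (fun i => (x i : ℝ)) (fun _ => (t : ℝ))) r

/-- `c⋄r = Lin(r) + c·NonLin(r)`, evaluated at `(x, t)`. -/
noncomputable def cDia {n : ℕ} (c : ℝ) (r : MvPolynomial (Vn n) ℕ)
    (x : Fin n → ℕ) (t : ℕ) : ℝ :=
  evalR (linPart r) x t + c * evalR (nonLinPart r) x t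

/-- Composition `r ∘ p`: substitute `p[i]` for `xᵢ` in `r`, leaving τ fixed. -/
noncomputable def tcomp {n : ℕ} (r : MvPolynomial (Vn n) ℕ)
    (p : Fin n → MvPolynomial (Vn n) ℕ) : MvPolynomial (Vn n) ℕ :=
  bind₁ (Sum.elim p (fun _ => X (Sum.inr ()))) r

/-- Evaluation of a τ-multi-polynomial component over ℕ at `(x, t)`. -/
noncomputable def evalN {n : ℕ} (r : MvPolynomial (Vn n) ℕ) (x : Fin n → ℕ) (t : ℕ) : ℕ :=
  eval (Sum.elim x (fun _ => t)) r


/-- The abstraction map `α`: replace every nonzero coefficient by `1`. -/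
noncomputable def absP {σ : Type*} (p : MvPolynomial σ ℕ) : MvPolynomial σ ℕ :=
  ∑ m ∈ p.support, monomial m 1

/-- `⌊q⌋ = α(q[1/τ])`: substitute `1` for τ, then flatten coefficients to 0/1. -/
noncomputable def flat {n : ℕ} (q : MvPolynomial (Vn n) ℕ) : MvPolynomial (Fin n) ℕ :=
  absP (aeval (Sum.elim X (fun _ => 1)) q)

/-- Composition of τ-multi-polynomials: `(f ∘ g)[i] = f[i](g)`, τ fixed. -/
noncomputable def mpComp {n : ℕ} (f g : Fin n → MvPolynomial (Vn n) ℕ) :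
    Fin n → MvPolynomial (Vn n) ℕ :=
  fun i => tcomp (f i) g

open Classical in
/-- The self-dependent cut `⌈q⌉` relative to the common abstraction `A`:
self-dependent components are replaced by the identity `xᵢ`. -/
noncomputable def cutA {n : ℕ} (A : Fin n → MvPolynomial (Fin n) ℕ)
    (q : Fin n → MvPolynomial (Vn n) ℕ) : Fin n → MvPolynomial (Vn n) ℕ :=
  fun i => if i ∈ (A i).vars then X (Sum.inl i) else q i

/-- `chainMP A p ℓ = q_{ℓ+1} = p₁ ∘ ⌈p₂⌉ ∘ ⋯ ∘ ⌈p_{ℓ+1}⌉`. -/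
noncomputable def chainMP {n : ℕ} (A : Fin n → MvPolynomial (Fin n) ℕ)
    (p : ℕ → Fin n → MvPolynomial (Vn n) ℕ) :
    ℕ → Fin n → MvPolynomial (Vn n) ℕ
  | 0 => p 1
  | ℓ + 1 => mpComp (chainMP A p ℓ) (cutA A (p (ℓ + 2)))

/-!
Because the coefficients are natural numbers, substituting `1` for `τ` cancels no monomial, so
every program variable of `p k i` already occurs in the common abstraction `A i`; by neatness it
has index `≤ i`, and index `< i` unless it is `xᵢ` with `i` self-dependent. Following a variable
`x_j` of `p₁ ∘ ⌈p₂⌉ ∘ ⋯ ∘ ⌈p_{ℓ+1}⌉` back through the layers, each cut either passes a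
self-dependent variable through unchanged or strictly lowers its index. A variable that is not
self-dependent is therefore lowered at every one of the `ℓ + 1` layers, so `j + ℓ < i`, which is
impossible for `ℓ = n - 1`.
-/

section SumElimOne

variable {σ τ R : Type*}

theorem aeval_sumElim_one_monomial [CommSemiring R] (m : σ ⊕ τ →₀ ℕ) (c : R) :
    aeval (Sum.elim X fun _ => 1 : σ ⊕ τ → MvPolynomial σ R) (monomial m c) =
      monomial (m.comapDomain Sum.inl Sum.inl_injective.injOn) c := by
  conv_lhs => rw [← Finsupp.comapDomain_sumElim_comapDomain m]
  rw [aeval_monomial, Finsupp.prod_sumElim, monomial_eq]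
  simp [Function.comp_def]

theorem coeff_aeval_sumElim_one [CommSemiring R] [DecidableEq σ]
    (q : MvPolynomial (σ ⊕ τ) R) (d : σ →₀ ℕ) :
    coeff d (aeval (Sum.elim X fun _ => 1 : σ ⊕ τ → MvPolynomial σ R) q) =
      ∑ m ∈ q.support,
        if m.comapDomain Sum.inl Sum.inl_injective.injOn = d then coeff m q else 0 := by
  conv_lhs => rw [q.as_sum]
  simp only [map_sum, aeval_sumElim_one_monomial, coeff_sum, coeff_monomial]

theorem mem_vars_aeval_sumElim_one [CommSemiring R] [PartialOrder R] [CanonicallyOrderedAdd R]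
    {q : MvPolynomial (σ ⊕ τ) R} {j : σ} (h : Sum.inl j ∈ q.vars) :
    j ∈ (aeval (Sum.elim X fun _ => 1 : σ ⊕ τ → MvPolynomial σ R) q).vars := by
  classical
  obtain ⟨m, hm, hj⟩ := (mem_vars_iff_mem_support _).mp h
  refine (mem_vars_iff_mem_support _).mpr
    ⟨m.comapDomain Sum.inl Sum.inl_injective.injOn, ?_, by simpa using hj⟩
  rw [mem_support_iff, coeff_aeval_sumElim_one, Ne, Finset.sum_eq_zero_iff]
  exact fun hzero => mem_support_iff.mp hm (by simpa using hzero m hm)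

end SumElimOne

theorem support_absP {σ : Type*} (p : MvPolynomial σ ℕ) : (absP p).support = p.support := by
  classical
  ext d
  simp only [absP, mem_support_iff, coeff_sum, coeff_monomial, Finset.sum_ite_eq',
    ite_ne_right_iff]
  tauto

theorem mem_vars_flat {n : ℕ} {q : MvPolynomial (Vn n) ℕ} {j : Fin n}
    (h : Sum.inl j ∈ q.vars) : j ∈ (flat q).vars := by
  have hj := (mem_vars_iff_mem_support _).mp (mem_vars_aeval_sumElim_one h)
  rwa [← support_absP, ← mem_vars_iff_mem_support] at hj

theorem mem_vars_tcomp {n : ℕ} {r : MvPolynomial (Vn n) ℕ} {q : Fin n → MvPolynomial (Vn n) ℕ}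
    {j : Fin n} (h : Sum.inl j ∈ (tcomp r q).vars) :
    ∃ k, Sum.inl k ∈ r.vars ∧ Sum.inl j ∈ (q k).vars := by
  obtain ⟨v | u, hv, hj⟩ := mem_vars_bind₁ _ _ h
  · exact ⟨v, hv, hj⟩
  · simp at hj

section SelfDependentCut

variable {n : ℕ} {A : Fin n → MvPolynomial (Fin n) ℕ}

theorem mem_vars_of_flat_eq {q : MvPolynomial (Vn n) ℕ} {a : MvPolynomial (Fin n) ℕ}
    (hq : flat q = a) {j : Fin n} (h : Sum.inl j ∈ q.vars) : j ∈ a.vars :=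
  hq ▸ mem_vars_flat h

theorem mem_vars_cutA {q : Fin n → MvPolynomial (Vn n) ℕ} (hq : ∀ i, flat (q i) = A i)
    (hDAG : ∀ i j : Fin n, j ∈ (A i).vars → j ≤ i) {k j : Fin n}
    (h : Sum.inl j ∈ (cutA A q k).vars) :
    j = k ∧ k ∈ (A k).vars ∨ j < k ∧ k ∉ (A k).vars := by
  by_cases hself : k ∈ (A k).vars
  · rw [cutA, if_pos hself] at h
    exact .inl ⟨by simpa using h, hself⟩
  · rw [cutA, if_neg hself] at h
    have hj := mem_vars_of_flat_eq (hq k) h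
    exact .inr ⟨(hDAG k j hj).lt_of_ne (by rintro rfl; exact hself hj), hself⟩

theorem mem_vars_chainMP {p : ℕ → Fin n → MvPolynomial (Vn n) ℕ}
    (hsim : ∀ k, 1 ≤ k → k ≤ n → ∀ i, flat (p k i) = A i)
    (hDAG : ∀ i j : Fin n, j ∈ (A i).vars → j ≤ i) {ℓ : ℕ} (hℓ : ℓ + 1 ≤ n) {i j : Fin n}
    (h : Sum.inl j ∈ (chainMP A p ℓ i).vars) :
    j ≤ i ∧ (j ∉ (A j).vars → j.val + ℓ < i.val) := by
  induction ℓ generalizing j with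
  | zero =>
    have hj := mem_vars_of_flat_eq (hsim 1 le_rfl hℓ i) h
    refine ⟨hDAG i j hj, fun hself => ?_⟩
    have : j < i := (hDAG i j hj).lt_of_ne (by rintro rfl; exact hself hj)
    simpa using this
  | succ ℓ ih =>
    obtain ⟨k, hk, hjk⟩ := mem_vars_tcomp h
    obtain ⟨hki, hk_shift⟩ := ih (by omega) hk
    rcases mem_vars_cutA (hsim (ℓ + 2) (by omega) (by omega)) hDAG hjk with
      ⟨rfl, hself⟩ | ⟨hjk, hself⟩
    · exact ⟨hki, fun hnot => (hnot hself).elim⟩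
    · have := hk_shift hself
      exact ⟨hjk.le.trans hki, fun _ => by simp only [Fin.lt_def] at hjk; omega⟩

end SelfDependentCut

theorem stmt12_general {n : ℕ} (A : Fin n → MvPolynomial (Fin n) ℕ)
    (p : ℕ → Fin n → MvPolynomial (Vn n) ℕ)
    (hsim : ∀ k, 1 ≤ k → k ≤ n → ∀ i, flat (p k i) = A i)
    (hneatDAG : ∀ i j : Fin n, j ∈ (A i).vars → j ≤ i) :
    ∀ i j : Fin n, (Sum.inl j : Vn n) ∈ (chainMP A p (n - 1) i).vars →
      j ∈ (A j).vars ∧ j ≤ i := by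
  intro i j h
  obtain ⟨hji, hshift⟩ := mem_vars_chainMP hsim hneatDAG (Nat.sub_add_cancel i.pos).le h
  refine ⟨by_contra fun hself => ?_, hji⟩
  have := hshift hself
  have := i.isLt
  omega

/-- Under the hypotheses of the self-dependent-cut lemma, the full composition
`⟨p₁⋯pₙ⟩ = p₁ ∘ ⌈p₂⌉ ∘ ⋯ ∘ ⌈pₙ⌉` (here `chainMP A p (n-1)`) is iterative:
every component depends only on self-dependent variables of index `≤ i`. -/
theorem stmt12 {n : ℕ} (hn : 1 ≤ n) (A : Fin n → MvPolynomial (Fin n) ℕ)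
    (p : ℕ → Fin n → MvPolynomial (Vn n) ℕ)
    (hsim : ∀ k, 1 ≤ k → k ≤ n → ∀ i, flat (p k i) = A i)
    (hneatDAG : ∀ i j : Fin n, j ∈ (A i).vars → j ≤ i)
    (hneatSelf : ∀ i : Fin n, ∀ m ∈ (A i).support,
      m i ≠ 0 → m = Finsupp.single i 1) :
    ∀ i j : Fin n, (Sum.inl j : Vn n) ∈ (chainMP A p (n - 1) i).vars →
      j ∈ (A j).vars ∧ j ≤ i :=
  stmt12_general A p hsim hneatDAG
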